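/- The polynomials p1, p2, p3, p4, p5, p6, p7 defined in the context are linearly independent over ℂ in ℂ[h1,h2], and the polynomial p8 defined in the context lies in the ℂ-linear span of p1,…,p7 (equivalently, the family {p1,…,p8} is linearly dependent over ℂ). -/

import Mathlib

open MvPolynomial

/-! `PG4, …, PG7` all contain the factor `h1 + 2 * h2 + 2`. Evaluating at three points of that
line and at four further points therefore gives a block-triangular `7 × 7` matrix with nonsingular
diagonal blocks, so evaluation is injective on the span of `PG1, …, PG7`. The dependence
`PG8 = -PG1 - 6 PG2 - 9 PG4 + 6 PG5` is a polynomial identity. -/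

/- Polynomials in `ℂ[h1, h2]` (with `h1 = X 0`, `h2 = X 1`): the Harish–Chandra
projections of eight explicit zero-weight vectors in the submodule of `U(G₂)` generated,
under the left-adjoint action, by the image in the Zhu algebra of the conformal-weight-6
singular vector of `V^{-2}(G₂)`. -/

noncomputable def PG1 : MvPolynomial (Fin 2) ℂ :=
  let h1 := (X 0 : MvPolynomial (Fin 2) ℂ); let h2 := (X 1 : MvPolynomial (Fin 2) ℂ);
  -24*(2*h1 + 3*h2 + 3)*(8*h1^5 + 60*h2*h1^4 + 36*h1^4 + 178*h2^2*h1^3 + 212*h2*h1^3 +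
    24*h1^3 + 261*h2^3*h1^2 + 438*h2^2*h1^2 + 48*h2*h1^2 - 44*h1^2 + 189*h2^4*h1 +
    369*h2^3*h1 - 28*h2^2*h1 - 152*h2*h1 - 24*h1 + 54*h2^5 + 108*h2^4 - 42*h2^3 -
    96*h2^2 - 24*h2)

noncomputable def PG2 : MvPolynomial (Fin 2) ℂ :=
  let h1 := (X 0 : MvPolynomial (Fin 2) ℂ); let h2 := (X 1 : MvPolynomial (Fin 2) ℂ);
  2*(32*h1^6 + 294*h2*h1^5 + 192*h1^5 + 1081*h2^2*h1^4 + 1398*h2*h1^4 + 312*h1^4 +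
    2070*h2^3*h1^3 + 3928*h2^2*h1^3 + 1542*h2*h1^3 - 32*h1^3 + 2223*h2^4*h1^2 +
    5346*h2^3*h1^2 + 2557*h2^2*h1^2 - 630*h2*h1^2 - 360*h1^2 + 1296*h2^5*h1 +
    3582*h2^4*h1 + 1656*h2^3*h1 - 1554*h2^2*h1 - 1164*h2*h1 - 144*h1 + 324*h2^6 +
    972*h2^5 + 396*h2^4 - 828*h2^3 - 720*h2^2 - 144*h2)

noncomputable def PG3 : MvPolynomial (Fin 2) ℂ :=
  let h1 := (X 0 : MvPolynomial (Fin 2) ℂ); let h2 := (X 1 : MvPolynomial (Fin 2) ℂ);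
  -4*(16*h1^6 + 161*h2*h1^5 + 96*h1^5 + 634*h2^2*h1^4 + 763*h2*h1^4 + 156*h1^4 +
    1254*h2^3*h1^3 + 2260*h2^2*h1^3 + 865*h2*h1^3 - 16*h1^3 + 1332*h2^4*h1^2 +
    3123*h2^3*h1^2 + 1558*h2^2*h1^2 - 271*h2*h1^2 - 180*h1^2 + 729*h2^5*h1 +
    2016*h2^4*h1 + 1041*h2^3*h1 - 708*h2^2*h1 - 582*h2*h1 - 72*h1 + 162*h2^6 +
    486*h2^5 + 198*h2^4 - 414*h2^3 - 360*h2^2 - 72*h2)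

noncomputable def PG4 : MvPolynomial (Fin 2) ℂ :=
  let h1 := (X 0 : MvPolynomial (Fin 2) ℂ); let h2 := (X 1 : MvPolynomial (Fin 2) ℂ);
  6*h1*h2*(h1 + h2 + 1)*(h1 + 2*h2 + 2)*(h1 + 3*h2 + 3)*(2*h1 + 3*h2)

noncomputable def PG5 : MvPolynomial (Fin 2) ℂ :=
  let h1 := (X 0 : MvPolynomial (Fin 2) ℂ); let h2 := (X 1 : MvPolynomial (Fin 2) ℂ);
  2*h1*(h1 + 2*h2 + 2)*(32*h1^4 + 218*h2*h1^3 + 128*h1^3 + 555*h2^2*h1^2 + 614*h2*h1^2 +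
    56*h1^2 + 612*h2^3*h1 + 882*h2^2*h1 - 10*h2*h1 - 144*h1 + 243*h2^4 + 360*h2^3 -
    249*h2^2 - 390*h2 - 72)

noncomputable def PG6 : MvPolynomial (Fin 2) ℂ :=
  let h1 := (X 0 : MvPolynomial (Fin 2) ℂ); let h2 := (X 1 : MvPolynomial (Fin 2) ℂ);
  -2*h1*(h1 + 2*h2 + 2)*(16*h1^4 + 109*h2*h1^3 + 64*h1^3 + 264*h2^2*h1^2 + 289*h2*h1^2 +
    28*h1^2 + 279*h2^3*h1 + 396*h2^2*h1 - 17*h2*h1 - 72*h1 + 108*h2^4 + 153*h2^3 -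
    132*h2^2 - 189*h2 - 36)

noncomputable def PG7 : MvPolynomial (Fin 2) ℂ :=
  let h1 := (X 0 : MvPolynomial (Fin 2) ℂ); let h2 := (X 1 : MvPolynomial (Fin 2) ℂ);
  -4*(h1 - 1)*h1*(h1 + 2*h2 + 2)*(h1 + 2*h2 + 3)*(16*h1^2 + 63*h2*h1 + 32*h1 + 63*h2^2 +
    63*h2 + 12)

noncomputable def PG8 : MvPolynomial (Fin 2) ℂ :=
  let h1 := (X 0 : MvPolynomial (Fin 2) ℂ); let h2 := (X 1 : MvPolynomial (Fin 2) ℂ);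
  6*(64*h1^6 + 534*h2*h1^5 + 384*h1^5 + 1829*h2^2*h1^4 + 2556*h2*h1^4 + 624*h1^4 +
    3168*h2^3*h1^3 + 6210*h2^2*h1^3 + 2594*h2*h1^3 - 64*h1^3 + 2727*h2^4*h1^2 +
    6426*h2^3*h1^2 + 2863*h2^2*h1^2 - 1412*h2*h1^2 - 720*h1^2 + 918*h2^5*h1 +
    2322*h2^4*h1 + 402*h2^3*h1 - 2538*h2^2*h1 - 1824*h2*h1 - 288*h1)

namespace MvPolynomial

variable {R σ ι κ : Type*} [CommRing R]

noncomputable def evalMatrix (x : κ → σ → R) (p : ι → MvPolynomial σ R) : Matrix κ ι R :=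
  Matrix.of fun j i => eval (x j) (p i)

theorem linearIndependent_of_det_evalMatrix_ne_zero [IsDomain R] [Fintype ι] [DecidableEq ι]
    {p : ι → MvPolynomial σ R} (x : ι → σ → R) (h : (evalMatrix x p).det ≠ 0) :
    LinearIndependent R p := by
  let ev : MvPolynomial σ R →ₗ[R] ι → R := LinearMap.pi fun j => (aeval (x j)).toLinearMap
  refine LinearIndependent.of_comp ev ?_
  convert Matrix.linearIndependent_cols_of_det_ne_zero h
  ext i j
  simp [ev, evalMatrix, Matrix.col]

theorem evalMatrix_sumElim (y : ι → σ → R) (z : κ → σ → R) (q : ι → MvPolynomial σ R)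
    (r : κ → MvPolynomial σ R) :
    evalMatrix (Sum.elim y z) (Sum.elim q r) =
      Matrix.fromBlocks (evalMatrix y q) (evalMatrix y r) (evalMatrix z q) (evalMatrix z r) := by
  ext (j | j) (i | i) <;> rfl

theorem linearIndependent_sumElim_of_det_evalMatrix_ne_zero [IsDomain R] [Fintype ι]
    [DecidableEq ι] [Fintype κ] [DecidableEq κ] {q : ι → MvPolynomial σ R}
    {r : κ → MvPolynomial σ R} (y : ι → σ → R) (z : κ → σ → R)
    (hr : ∀ j i, eval (y j) (r i) = 0) (hq : (evalMatrix y q).det ≠ 0)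
    (hz : (evalMatrix z r).det ≠ 0) :
    LinearIndependent R (Sum.elim q r) := by
  refine linearIndependent_of_det_evalMatrix_ne_zero (Sum.elim y z) ?_
  rw [evalMatrix_sumElim, show evalMatrix y r = 0 from Matrix.ext hr,
    Matrix.det_fromBlocks_zero₁₂]
  exact mul_ne_zero hq hz

end MvPolynomial

theorem vecCons_comp_finSumFinEquiv_three_four {α : Type*} (a b c d e f g : α) :
    ![a, b, c, d, e, f, g] ∘ finSumFinEquiv = Sum.elim ![a, b, c] ![d, e, f, g] := by
  funext x
  rcases x with i | i <;> fin_cases i <;> rfl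

theorem eval_PG4567_eq_zero_of_line {v : Fin 2 → ℂ} (hv : v 0 + 2 * v 1 + 2 = 0) (i : Fin 4) :
    eval v (![PG4, PG5, PG6, PG7] i) = 0 := by
  fin_cases i <;> simp [PG4, PG5, PG6, PG7, hv]

theorem evalMatrix_PG123 :
    evalMatrix ![![2, -2], ![-4, 1], ![4, -3]] ![PG1, PG2, PG3] =
      !![384, -128, 192; -13440, -2240, 0; -3456, 1728, -3456] := by
  ext j i
  fin_cases j <;> fin_cases i <;> norm_num [evalMatrix, PG1, PG2, PG3]

theorem evalMatrix_PG4567 :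
    evalMatrix ![![1, -1], ![-1, -1], ![-1, 0], ![3, -2]] ![PG4, PG5, PG6, PG7] =
      !![6, 54, -24, 0; 30, -130, 44, 0; 0, -64, 32, 64; 0, -288, 288, 0] := by
  ext j i
  fin_cases j <;> fin_cases i <;> norm_num [evalMatrix, PG4, PG5, PG6, PG7]

theorem det_evalMatrix_PG123 :
    (evalMatrix ![![2, -2], ![-4, 1], ![4, -3]] ![PG1, PG2, PG3]).det = 2972712960 := by
  rw [evalMatrix_PG123]
  norm_num [Matrix.det_fin_three, Matrix.cons_val_two, Matrix.vecHead, Matrix.vecTail]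

theorem det_evalMatrix_PG4567 :
    (evalMatrix ![![1, -1], ![-1, -1], ![-1, 0], ![3, -2]] ![PG4, PG5, PG6, PG7]).det =
      26099712 := by
  rw [evalMatrix_PG4567]
  simp [Matrix.det_succ_row_zero, Fin.sum_univ_succ, Fin.succAbove]
  norm_num

theorem linearIndependent_PG_sumElim :
    LinearIndependent ℂ (Sum.elim ![PG1, PG2, PG3] ![PG4, PG5, PG6, PG7]) := by
  refine linearIndependent_sumElim_of_det_evalMatrix_ne_zero ![![2, -2], ![-4, 1], ![4, -3]]
    ![![1, -1], ![-1, -1], ![-1, 0], ![3, -2]] (fun j => eval_PG4567_eq_zero_of_line ?_)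
    (by rw [det_evalMatrix_PG123]; norm_num) (by rw [det_evalMatrix_PG4567]; norm_num)
  fin_cases j <;> norm_num

theorem PG8_eq : PG8 = -PG1 - (6 : ℂ) • PG2 - (9 : ℂ) • PG4 + (6 : ℂ) • PG5 := by
  simp only [PG1, PG2, PG4, PG5, PG8, smul_eq_C_mul, map_ofNat]
  ring

theorem PG8_mem_span :
    PG8 ∈ Submodule.span ℂ ({PG1, PG2, PG3, PG4, PG5, PG6, PG7} :
      Set (MvPolynomial (Fin 2) ℂ)) := by
  rw [PG8_eq]
  refine add_mem (sub_mem (sub_mem (neg_mem ?_) (Submodule.smul_mem _ _ ?_))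
    (Submodule.smul_mem _ _ ?_)) (Submodule.smul_mem _ _ ?_) <;>
  exact Submodule.subset_span
    (by simp only [Set.mem_insert_iff, Set.mem_singleton_iff, true_or, or_true])

/-- The polynomials `PG1, …, PG7` are linearly independent over ℂ in `ℂ[h1, h2]`, and
`PG8` lies in their ℂ-linear span (so the family `{PG1, …, PG8}` is linearly dependent). -/
theorem G2_projections_linear_relations :
    LinearIndependent ℂ ![PG1, PG2, PG3, PG4, PG5, PG6, PG7] ∧
    PG8 ∈ Submodule.span ℂ ({PG1, PG2, PG3, PG4, PG5, PG6, PG7} :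
      Set (MvPolynomial (Fin 2) ℂ)) :=
  ⟨(linearIndependent_equiv' finSumFinEquiv (vecCons_comp_finSumFinEquiv_three_four ..)).mp
    linearIndependent_PG_sumElim, PG8_mem_span⟩
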